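/- Let C be a k-dimensional linear code of length n over F_3, let h be the dimension of the hull H(C) = C ∩ C^⊥, and let ζ = e^{2πi/3} ∈ ℂ be a primitive third root of unity. Then the complex modulus of Σ_{c ∈ C} ζ^{wt(c)} equals (√3)^{k+h}, where wt(c) is the Hamming weight of c. -/

import Mathlib

/-- The Euclidean dual of a linear code `C ⊆ F^n`. -/
def dualCode {F : Type*} [Field F] {n : ℕ} (C : Submodule F (Fin n → F)) :
    Submodule F (Fin n → F) where
  carrier := {x | ∀ c ∈ C, ∑ i, x i * c i = 0}
  add_mem' := by
    intro x y hx hy c hc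
    simp [add_mul, Finset.sum_add_distrib, hx c hc, hy c hc]
  zero_mem' := by
    intro c hc
    simp
  smul_mem' := by
    intro a x hx c hc
    simp [smul_eq_mul, mul_assoc, ← Finset.mul_sum, hx c hc]

/-!
Every nonzero element of `𝔽₃` squares to `1`, so `wt(c) ≡ c ⬝ᵥ c (mod 3)` and
`ζ ^ wt(c) = ψ (c ⬝ᵥ c)` for the standard additive character `ψ` of `𝔽₃`. For any primitive
character `ψ` of a finite field of odd characteristic, multiplying `S = ∑_{c ∈ C} ψ (c ⬝ᵥ c)`
by its conjugate and substituting `c = d + e` gives `|S|² = ∑_e ψ (e ⬝ᵥ e) ∑_d ψ (2e ⬝ᵥ d)`.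
By orthogonality the inner sum is `|C|` for `e ∈ C^⊥` and `0` otherwise, and `e ⬝ᵥ e = 0` on the
hull, so `|S|² = |C| · |C ∩ C^⊥| = 3 ^ (k + h)`.
-/

open Matrix ComplexConjugate

section CharacterSums

variable {F : Type*} [Field F] {n : ℕ} (C : Submodule F (Fin n → F))

theorem mem_dualCode_iff {v : Fin n → F} : v ∈ dualCode C ↔ ∀ c ∈ C, v ⬝ᵥ c = 0 := Iff.rfl

theorem card_subtype_mem_dualCode :
    Nat.card {e : C // (e : Fin n → F) ∈ dualCode C} = Nat.card ↥(C ⊓ dualCode C) :=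
  Nat.card_congr (Equiv.subtypeSubtypeEquivSubtypeInter (· ∈ C) (· ∈ dualCode C))

theorem add_dotProduct_self_sub (d e : Fin n → F) :
    (d + e) ⬝ᵥ (d + e) - d ⬝ᵥ d = e ⬝ᵥ e + ((2 : F) • e) ⬝ᵥ d := by
  simp only [add_dotProduct, dotProduct_add, smul_dotProduct, dotProduct_comm e d, smul_eq_mul]
  ring

variable [Fintype C] {ψ : AddChar F ℂ}

open Classical in
theorem sum_addChar_dotProduct (hψ : ψ.IsPrimitive) (v : Fin n → F) :
    ∑ c : C, ψ (v ⬝ᵥ c) = if v ∈ dualCode C then (Fintype.card C : ℂ) else 0 := by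
  let φ : AddChar C ℂ :=
    { toFun := fun c => ψ (v ⬝ᵥ c)
      map_zero_eq_one' := by simp
      map_add_eq_mul' := fun a b => by simp [dotProduct_add, AddChar.map_add_eq_mul] }
  have hφ : φ = 0 ↔ v ∈ dualCode C := by
    rw [mem_dualCode_iff]
    refine ⟨fun h c hc => ?_, fun hv => AddChar.eq_zero_iff.2 fun c => ?_⟩
    · by_contra hne
      obtain ⟨x, hx⟩ := AddChar.ne_zero_iff.1 (hψ hne)
      refine hx ?_
      simpa [φ, AddChar.mulShift_apply, dotProduct_smul, mul_comm] using
        AddChar.eq_zero_iff.1 h ⟨x • c, C.smul_mem x hc⟩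
    · simp [φ, hv c c.2]
  exact (AddChar.sum_eq_ite φ).trans (by simp only [hφ])

theorem sq_norm_sum_addChar_dotProduct_self [Finite F] (hψ : ψ.IsPrimitive) (h2 : (2 : F) ≠ 0) :
    ‖∑ c : C, ψ ((c : Fin n → F) ⬝ᵥ c)‖ ^ 2 = Fintype.card C * Nat.card ↥(C ⊓ dualCode C) := by
  classical
  set S := ∑ c : C, ψ ((c : Fin n → F) ⬝ᵥ c)
  have : S * conj S = Fintype.card C * Nat.card ↥(C ⊓ dualCode C) := by
    calc S * conj S = ∑ d : C, ∑ c : C, ψ ((c : Fin n → F) ⬝ᵥ c - (d : Fin n → F) ⬝ᵥ d) := by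
          rw [map_sum, Finset.sum_mul_sum, Finset.sum_comm]
          simp only [sub_eq_add_neg, AddChar.map_add_eq_mul, AddChar.map_neg_eq_conj]
      _ = ∑ d : C, ∑ e : C, ψ ((e : Fin n → F) ⬝ᵥ e) * ψ (((2 : F) • (e : Fin n → F)) ⬝ᵥ d) := by
          refine Finset.sum_congr rfl fun d _ => ?_
          refine (Fintype.sum_equiv (Equiv.addLeft d) _ _ fun e => ?_).symm
          rw [← AddChar.map_add_eq_mul, Equiv.coe_addLeft, Submodule.coe_add,
            add_dotProduct_self_sub]
      _ = ∑ e : C, if (e : Fin n → F) ∈ dualCode C then (Fintype.card C : ℂ) else 0 := by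
          rw [Finset.sum_comm]
          refine Finset.sum_congr rfl fun e _ => ?_
          rw [← Finset.mul_sum, sum_addChar_dotProduct C hψ, (dualCode C).smul_mem_iff h2]
          split_ifs with he
          · rw [(mem_dualCode_iff C).1 he e e.2, AddChar.map_zero_eq_one, one_mul]
          · rw [mul_zero]
      _ = Fintype.card C * Nat.card ↥(C ⊓ dualCode C) := by
          rw [Finset.sum_ite, Finset.sum_const_zero, add_zero, Finset.sum_const, nsmul_eq_mul,
            ← card_subtype_mem_dualCode, Nat.card_eq_fintype_card,
            Fintype.card_subtype (fun e : C => (e : Fin n → F) ∈ dualCode C), mul_comm]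
  exact_mod_cast (Complex.mul_conj' S).symm.trans this

end CharacterSums

theorem hammingNorm_cast_zmod_three {ι : Type*} [Fintype ι] (c : ι → ZMod 3) :
    (hammingNorm c : ZMod 3) = c ⬝ᵥ c := by
  classical
  have mul_self : ∀ x : ZMod 3, x * x = if x = 0 then 0 else 1 := by decide
  simp [dotProduct, mul_self, Finset.sum_ite, hammingNorm, Finset.filter_not]

theorem exp_two_pi_I_div_three_pow (m : ℕ) :
    Complex.exp (2 * Real.pi * Complex.I / 3) ^ m = ZMod.stdAddChar (m : ZMod 3) := by
  rw [← Complex.exp_nat_mul, ZMod.stdAddChar_apply, ZMod.toCircle_natCast]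
  push_cast
  ring_nf

/-- For a ternary `[n, k]` code `C` with hull of dimension `h`, and
`ζ = e^{2πi/3}` a primitive third root of unity, the modulus of the
evaluation `W_C(1, ζ) = Σ_{c ∈ C} ζ^{wt(c)}` of the weight enumerator equals
`(√3)^{k+h}`. -/
theorem abs_weight_enumerator_ternary_eval_root_of_unity {n k h : ℕ}
    (C : Submodule (ZMod 3) (Fin n → ZMod 3)) [Fintype C]
    (hk : Module.finrank (ZMod 3) C = k)
    (hh : Module.finrank (ZMod 3) ↥(C ⊓ dualCode C) = h) :
    ‖(∑ c : C,
          Complex.exp (2 * Real.pi * Complex.I / 3) ^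
            hammingNorm (c : Fin n → ZMod 3))‖ =
      Real.sqrt 3 ^ (k + h) := by
  have hsq := sq_norm_sum_addChar_dotProduct_self C (ZMod.isPrimitive_stdAddChar 3) (by decide)
  rw [Module.card_eq_pow_finrank (K := ZMod 3), Module.natCard_eq_pow_finrank (K := ZMod 3), hk,
    hh, ZMod.card, Nat.card_zmod] at hsq
  simp_rw [exp_two_pi_I_div_three_pow, hammingNorm_cast_zmod_three]
  refine (pow_left_inj₀ (norm_nonneg _) (by positivity) two_ne_zero).1 ?_
  rw [hsq, ← pow_mul, mul_comm (k + h), pow_mul, Real.sq_sqrt zero_le_three]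
  push_cast
  ring
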